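/- (Monotonicity of selection) Under the hypotheses of branch covariance and completeness, if select(C̄) denotes the unique most specific branch applicable to C̄, then for any D̄ <: C̄ (pointwise), select(D̄) exists, its signature is a subtype (pointwise) of the signature of select(C̄), and its return type is a subtype of the return type of select(C̄). -/

import Mathlib

/-- Single inheritance: the up-set of any class is linearly ordered by `≤`. -/
def SingleInheritance (α : Type*) [PartialOrder α] : Prop :=
  ∀ c a b : α, c ≤ a → c ≤ b → a ≤ b ∨ b ≤ a

/-- `K` is a maximal lower bound of `A` and `B`. -/
def MaximalLowerBound {β : Type*} [PartialOrder β] (K A B : β) : Prop :=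
  K ≤ A ∧ K ≤ B ∧ ∀ K', K ≤ K' → K' ≤ A → K' ≤ B → K' = K

/-- A branch: a signature and a return type. -/
structure Branch (α : Type*) (n : ℕ) where
  sig : Fin n → α
  ret : α

/-- `b` is the (unique) most specific branch of `O` applicable to `Cs`. -/
def IsSelect {α : Type*} [PartialOrder α] {n : ℕ} (O : Finset (Branch α n))
    (Cs : Fin n → α) (b : Branch α n) : Prop :=
  b ∈ O ∧ Cs ≤ b.sig ∧ ∀ b' ∈ O, Cs ≤ b'.sig → b.sig ≤ b'.sig

/-!
Under single inheritance the classes above a common lower bound form a chain, so two signatures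
with a common lower bound have a pointwise minimum, which is their greatest lower bound; hence a
maximal lower bound of them is above every common lower bound. Now let `bD` have a minimal
signature among the branches applicable to `D̄` (one exists, as `select(C̄)` is applicable). For any
other applicable `b'`, completeness gives a branch at the maximal lower bound of `bD.sig` and
`b'.sig`; it is again applicable, so by minimality it is `bD.sig`, i.e. `bD.sig ≤ b'.sig`. Thus
`bD` is `select(D̄)`, it lies below `select(C̄)`, and covariance compares the return types.
-/

namespace SingleInheritance

variable {α : Type*} [PartialOrder α]

lemma exists_isLeast_pair (hSI : SingleInheritance α) {c a b : α} (ha : c ≤ a) (hb : c ≤ b) :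
    ∃ m, IsLeast {a, b} m := by
  rcases hSI c a b ha hb with h | h
  · exact ⟨a, by simp, by simp [h]⟩
  · exact ⟨b, by simp, by simp [h]⟩

lemma le_of_maximalLowerBound (hSI : SingleInheritance α) {ι : Type*} {K A B L : ι → α}
    (hK : MaximalLowerBound K A B) (hLA : L ≤ A) (hLB : L ≤ B) : L ≤ K := by
  choose g hg using fun i => hSI.exists_isLeast_pair (hLA i) (hLB i)
  have hgA : g ≤ A := fun i => (hg i).2 (by simp)
  have hgB : g ≤ B := fun i => (hg i).2 (by simp)
  have le_g : ∀ X, X ≤ A → X ≤ B → X ≤ g := fun X hXA hXB i => by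
    rcases (hg i).1 with h | h <;> rw [h]
    exacts [hXA i, hXB i]
  obtain ⟨hKA, hKB, hKmax⟩ := hK
  rw [← hKmax g (le_g K hKA hKB) hgA hgB]
  exact le_g L hLA hLB

theorem exists_isSelect (hSI : SingleInheritance α) {n : ℕ} (O : Finset (Branch α n))
    (hcomp : ∀ b₁ ∈ O, ∀ b₂ ∈ O, (∃ L, L ≤ b₁.sig ∧ L ≤ b₂.sig) →
      ∃ b ∈ O, MaximalLowerBound b.sig b₁.sig b₂.sig)
    {Ds : Fin n → α} (happ : ∃ b ∈ O, Ds ≤ b.sig) : ∃ bD, IsSelect O Ds bD := by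
  classical
  obtain ⟨bD, hbD, hmin⟩ := (O.filter (Ds ≤ ·.sig)).exists_minimalFor Branch.sig
    (by simpa [Finset.Nonempty] using happ)
  obtain ⟨hbDO, hDbD⟩ := Finset.mem_filter.1 hbD
  refine ⟨bD, hbDO, hDbD, fun b' hb'O hDb' => ?_⟩
  obtain ⟨b, hbO, hb⟩ := hcomp bD hbDO b' hb'O ⟨Ds, hDbD, hDb'⟩
  have hDb : Ds ≤ b.sig := hSI.le_of_maximalLowerBound hb hDbD hDb'
  calc bD.sig ≤ b.sig := hmin (Finset.mem_filter.2 ⟨hbO, hDb⟩) hb.1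
    _ ≤ b'.sig := hb.2.1

end SingleInheritance

/-- Monotonicity of selection: under covariance and completeness, if `bC` is the
most specific branch applicable to `Cs` and `Ds ≤ Cs`, then `select(Ds)` exists,
its signature is pointwise below that of `bC`, and its return type is below that
of `bC`. -/
theorem select_monotone {α : Type*} [PartialOrder α]
    (hSI : SingleInheritance α) {n : ℕ} (O : Finset (Branch α n))
    (hcov : ∀ b₁ ∈ O, ∀ b₂ ∈ O, b₁.sig ≤ b₂.sig → b₁.ret ≤ b₂.ret)
    (hcomp : ∀ b₁ ∈ O, ∀ b₂ ∈ O, (∃ L, L ≤ b₁.sig ∧ L ≤ b₂.sig) →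
      ∃ b ∈ O, MaximalLowerBound b.sig b₁.sig b₂.sig)
    (Cs Ds : Fin n → α) (hDC : Ds ≤ Cs)
    (bC : Branch α n) (hbC : IsSelect O Cs bC) :
    ∃ bD, IsSelect O Ds bD ∧ bD.sig ≤ bC.sig ∧ bD.ret ≤ bC.ret := by
  obtain ⟨hbCO, hCbC, -⟩ := hbC
  have hDbC : Ds ≤ bC.sig := hDC.trans hCbC
  obtain ⟨bD, hbD⟩ := hSI.exists_isSelect O hcomp ⟨bC, hbCO, hDbC⟩
  have hle : bD.sig ≤ bC.sig := hbD.2.2 bC hbCO hDbC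
  exact ⟨bD, hbD, hle, hcov bD hbD.1 bC hbCO hle⟩
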